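/- arXiv:1701.00200 — 2 statements merged into one kernel-verified Lean document; each statement's English description precedes it below -/
import Mathlib

section
/- Fix a nonzero integer ν, let φ, ϱ : ℤ × ℤ → ℂ with ϱ not identically zero, and define a bilinear product ∘ on the Witt algebra W by L_m ∘ L_n = φ(m, n)·L_{m+n} + ϱ(m, n)·L_{m+n+ν} for all m, n ∈ ℤ. Then (W, [·,·], ∘) is a post-Lie algebra if and only if there exist functions f, g : ℤ → ℂ such that φ(m, n) = (m − n)·f(m) and ϱ(m, n) = (m − n + ν)·g(m) for all m, n ∈ ℤ, f satisfies equation (E), and (f, g, ν) satisfy equations (E2) and (E3). -/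
noncomputable section

/-- The underlying space of the Witt algebra: the free ℂ-module on basis `{L m : m ∈ ℤ}`,
realized as finitely supported functions `ℤ →₀ ℂ`. -/
abbrev W : Type := ℤ →₀ ℂ

/-- The standard basis vector `L m`. -/
def L (m : ℤ) : W := Finsupp.single m 1

/-- `(W, br, mul)` is a post-Lie algebra: `br` plays the role of the Lie bracket `[·,·]`
and `mul` of the product `∘`, satisfying
`[x,y] ∘ z = x ∘ (y ∘ z) − y ∘ (x ∘ z) − ⟨x,y⟩ ∘ z` and
`x ∘ [y,z] = [x ∘ y, z] + [y, x ∘ z]`, where `⟨x,y⟩ = x ∘ y − y ∘ x`. -/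
def IsPostLie (br mul : W →ₗ[ℂ] W →ₗ[ℂ] W) : Prop :=
  (∀ x y z : W, mul (br x y) z =
      mul x (mul y z) - mul y (mul x z) - mul (mul x y - mul y x) z) ∧
  (∀ x y z : W, mul x (br y z) = br (mul x y) z + br y (mul x z))

/-- Equation (E). -/
def EqE (f : ℤ → ℂ) : Prop :=
  ∀ m n : ℤ,
    (m - n : ℂ) * (f (m + n) + f m * f (m + n) + f n * f (m + n) - f m * f n) = 0

/-- Equation (E2). -/
def EqE2 (ν : ℤ) (g : ℤ → ℂ) : Prop :=
  ∀ m n : ℤ,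
    (m - n : ℂ) * g m * g n =
      ((m - n + ν : ℂ) * g m + (m - n - ν : ℂ) * g n) * g (m + n + ν)

/-- Equation (E3). -/
def EqE3 (ν : ℤ) (f g : ℤ → ℂ) : Prop :=
  ∀ m n : ℤ,
    (m - n : ℂ) * (f m + f n + 1) * g (m + n) =
      (n - m + ν : ℂ) * (f (m + n + ν) - f m) * g n +
        (n - m - ν : ℂ) * (f (m + n + ν) - f n) * g m

/-!
Both post-Lie axioms are trilinear, so they hold as soon as they hold on basis triples
`(L m, L n, L p)`, where they become identities between the coefficients of the vectors
`L (m + n + p + j * ν)`.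

The second axiom says that `x ↦ L m ∘ x` is a derivation of `W`. Its homogeneous components
`L n ↦ φ m n • L (n + m)` and `L n ↦ ϱ m n • L (n + m + ν)` are then derivations of degree `m`
and `m + ν`, and every homogeneous derivation of `W` is inner, i.e. a multiple of `ad (L k)`.
This produces `f` and `g`.

Once `φ` and `ϱ` have this shape, the coefficient of `L (m + n + p + j * ν)` in the first axiom
is `m + n + j * ν - p` times the defect of (E), (E3), (E2) for `j = 0, 1, 2`, so choosing
`p = m + n + j * ν - 1` isolates each equation.
-/

lemma eq_zsmul_of_add_of_ne {G : Type*} [AddCommGroup G] {u : ℤ → G}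
    (h : ∀ n p, n ≠ p → u (n + p) = u n + u p) (n : ℤ) : u n = n • u 1 := by
  have h0 : u 0 = 0 := by simpa using h 1 0 one_ne_zero
  have hnonpos : ∀ n ≤ 0, u n = n • u 1 := by
    intro n hn
    induction n, hn using Int.leInductionDown with
    | base => simp [h0]
    | pred n hn ih =>
      have := h (n - 1) 1 (by omega)
      rw [sub_add_cancel, ih] at this
      rw [sub_smul, one_smul, this, add_sub_cancel_right]
  rcases le_or_gt n 0 with hn | hn
  · exact hnonpos n hn
  · have := h n (-n) (by omega)
    rwa [add_neg_cancel, h0, hnonpos (-n) (by omega), neg_smul, eq_comm, add_neg_eq_zero] at this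

/-- The coefficient of `L (n + p + k)` in `D [L n, L p] - [D (L n), L p] - [L n, D (L p)]`,
for the map `D (L n) = u n • L (n + k)` of degree `k`. -/
def derivationDefect {K : Type*} [Field K] (k : ℤ) (u : ℤ → K) (n p : ℤ) : K :=
  (n - p) * u (n + p) - ((k + n - p) * u n + (n - k - p) * u p)

/-- Homogeneous derivations of the Witt algebra are inner: `ad (L k) (L n) = (k - n) • L (n + k)`. -/
lemma forall_derivationDefect_eq_zero_iff {K : Type*} [Field K] [CharZero K] {k : ℤ}
    {u : ℤ → K} : (∀ n p, derivationDefect k u n p = 0) ↔ ∃ c, ∀ n, u n = (k - n) * c := by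
  constructor
  · intro h
    simp only [derivationDefect] at h
    rcases eq_or_ne k 0 with rfl | hk
    · have hadd : ∀ n p, n ≠ p → u (n + p) = u n + u p := fun n p hnp => by
        have hnp' : (n - p : K) ≠ 0 := sub_ne_zero.2 (Int.cast_injective.ne hnp)
        refine mul_left_cancel₀ hnp' ?_
        linear_combination h n p
      refine ⟨-u 1, fun n => ?_⟩
      rw [eq_zsmul_of_add_of_ne hadd n, zsmul_eq_mul]
      push_cast
      ring
    · have hk' : (k : K) ≠ 0 := Int.cast_ne_zero.2 hk
      refine ⟨u 0 / k, fun n => ?_⟩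
      have h0 := h n 0
      simp only [add_zero, Int.cast_zero, sub_zero] at h0
      field_simp
      linear_combination -h0
  · rintro ⟨c, hc⟩ n p
    simp only [derivationDefect, hc]
    push_cast
    ring

section PostLieDefects

variable {R M : Type*} [CommRing R] [AddCommGroup M] [Module R M] (br mul : M →ₗ[R] M →ₗ[R] M)

def associatorDefect : M →ₗ[R] M →ₗ[R] M →ₗ[R] M :=
  br.compr₂ mul - ((LinearMap.llcomp R M M M).comp mul).compl₂ mul
    + (((LinearMap.llcomp R M M M).comp mul).compl₂ mul).flip
    + mul.compr₂ mul - (mul.compr₂ mul).flip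

def leibnizDefect : M →ₗ[R] M →ₗ[R] M →ₗ[R] M :=
  ((LinearMap.llcomp R M M M).comp mul).compl₂ br - mul.compr₂ br
    - ((LinearMap.llcomp R M M M).comp br).flip.comp mul

@[simp]
lemma associatorDefect_apply (x y z : M) :
    associatorDefect br mul x y z =
      mul (br x y) z - (mul x (mul y z) - mul y (mul x z) - mul (mul x y - mul y x) z) := by
  simp only [associatorDefect, map_sub, LinearMap.sub_apply, LinearMap.add_apply,
    LinearMap.compr₂_apply, LinearMap.compl₂_apply, LinearMap.coe_comp, Function.comp_apply,
    LinearMap.flip_apply, LinearMap.llcomp_apply]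
  abel

@[simp]
lemma leibnizDefect_apply (x y z : M) :
    leibnizDefect br mul x y z = mul x (br y z) - (br (mul x y) z + br y (mul x z)) := by
  simp [leibnizDefect, sub_sub]

end PostLieDefects

lemma isPostLie_iff (br mul : W →ₗ[ℂ] W →ₗ[ℂ] W) :
    IsPostLie br mul ↔ (∀ x y z, associatorDefect br mul x y z = 0) ∧
      ∀ x y z, leibnizDefect br mul x y z = 0 := by
  simp only [IsPostLie, associatorDefect_apply, leibnizDefect_apply, sub_eq_zero]

lemma forall_L_eq_zero_iff {M : Type*} [AddCommGroup M] [Module ℂ M]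
    {D : W →ₗ[ℂ] W →ₗ[ℂ] W →ₗ[ℂ] M} :
    (∀ x y z, D x y z = 0) ↔ ∀ a b c, D (L a) (L b) (L c) = 0 := by
  refine ⟨fun h a b c => h _ _ _, fun h x y z => ?_⟩
  have hD : D = 0 := Finsupp.basisSingleOne.ext fun a =>
    LinearMap.ext_basis Finsupp.basisSingleOne Finsupp.basisSingleOne fun b c => h a b c
  simp [hD]

lemma smul_L_add_smul_L_eq_zero_iff {i j : ℤ} (hij : i ≠ j) {a b : ℂ} :
    a • L i + b • L j = 0 ↔ a = 0 ∧ b = 0 := by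
  refine ⟨fun h => ⟨?_, ?_⟩, fun ⟨ha, hb⟩ => by simp [ha, hb]⟩
  · simpa [L, Finsupp.single_apply, hij.symm] using DFunLike.congr_fun h i
  · simpa [L, Finsupp.single_apply, hij] using DFunLike.congr_fun h j

lemma smul_L_add_smul_L_add_smul_L_eq_zero_iff {i j k : ℤ} (hij : i ≠ j) (hik : i ≠ k)
    (hjk : j ≠ k) {a b c : ℂ} :
    a • L i + b • L j + c • L k = 0 ↔ a = 0 ∧ b = 0 ∧ c = 0 := by
  refine ⟨fun h => ⟨?_, ?_, ?_⟩, fun ⟨ha, hb, hc⟩ => by simp [ha, hb, hc]⟩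
  · simpa [L, Finsupp.single_apply, hij.symm, hik.symm] using DFunLike.congr_fun h i
  · simpa [L, Finsupp.single_apply, hij, hjk.symm] using DFunLike.congr_fun h j
  · simpa [L, Finsupp.single_apply, hik, hjk] using DFunLike.congr_fun h k

section WittProduct

variable {ν : ℤ} {br mul : W →ₗ[ℂ] W →ₗ[ℂ] W} {φ ϱ : ℤ → ℤ → ℂ} {f g : ℤ → ℂ}

lemma leibnizDefect_L
    (hbr : ∀ m n : ℤ, br (L m) (L n) = (m - n : ℂ) • L (m + n))
    (hmul : ∀ m n : ℤ, mul (L m) (L n) = φ m n • L (m + n) + ϱ m n • L (m + n + ν))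
    (m n p : ℤ) :
    leibnizDefect br mul (L m) (L n) (L p) =
      derivationDefect m (φ m) n p • L (m + n + p) +
        derivationDefect (m + ν) (ϱ m) n p • L (m + n + p + ν) := by
  simp only [leibnizDefect_apply, hbr, hmul, map_add, map_smul, LinearMap.add_apply,
    LinearMap.smul_apply, derivationDefect]
  rw [show m + (n + p) = m + n + p by ring, show m + n + ν + p = m + n + p + ν by ring,
    show n + (m + p) = m + n + p by ring, show n + (m + p + ν) = m + n + p + ν by ring]
  push_cast
  module

lemma forall_leibnizDefect_L_eq_zero_iff (hν : ν ≠ 0)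
    (hbr : ∀ m n : ℤ, br (L m) (L n) = (m - n : ℂ) • L (m + n))
    (hmul : ∀ m n : ℤ, mul (L m) (L n) = φ m n • L (m + n) + ϱ m n • L (m + n + ν)) :
    (∀ m n p, leibnizDefect br mul (L m) (L n) (L p) = 0) ↔
      (∃ f : ℤ → ℂ, ∀ m n : ℤ, φ m n = (m - n : ℂ) * f m) ∧
        ∃ g : ℤ → ℂ, ∀ m n : ℤ, ϱ m n = (m - n + ν : ℂ) * g m := by
  have hcoeff : ∀ m n p, leibnizDefect br mul (L m) (L n) (L p) = 0 ↔
      derivationDefect m (φ m) n p = 0 ∧ derivationDefect (m + ν) (ϱ m) n p = 0 := fun m n p => by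
    rw [leibnizDefect_L hbr hmul, smul_L_add_smul_L_eq_zero_iff (by omega)]
  simp only [hcoeff, forall_and, forall_derivationDefect_eq_zero_iff, Classical.skolem,
    Int.cast_add, add_sub_right_comm]

lemma associatorDefect_L
    (hbr : ∀ m n : ℤ, br (L m) (L n) = (m - n : ℂ) • L (m + n))
    (hmul : ∀ m n : ℤ, mul (L m) (L n) = φ m n • L (m + n) + ϱ m n • L (m + n + ν))
    (hf : ∀ m n : ℤ, φ m n = (m - n : ℂ) * f m) (hg : ∀ m n : ℤ, ϱ m n = (m - n + ν : ℂ) * g m)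
    (m n p : ℤ) :
    associatorDefect br mul (L m) (L n) (L p) =
      ((m + n - p : ℂ) * ((m - n : ℂ) *
          (f (m + n) + f m * f (m + n) + f n * f (m + n) - f m * f n))) • L (m + n + p) +
        ((m + n + ν - p : ℂ) * ((m - n : ℂ) * (f m + f n + 1) * g (m + n) -
          ((n - m + ν : ℂ) * (f (m + n + ν) - f m) * g n +
            (n - m - ν : ℂ) * (f (m + n + ν) - f n) * g m))) • L (m + n + p + ν) +
        ((m + n + ν + ν - p : ℂ) *
          (((m - n + ν : ℂ) * g m + (m - n - ν : ℂ) * g n) * g (m + n + ν) -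
            (m - n : ℂ) * g m * g n)) • L (m + n + p + ν + ν) := by
  simp only [associatorDefect_apply, hbr, hmul, map_add, map_sub, map_smul, LinearMap.add_apply,
    LinearMap.sub_apply, LinearMap.smul_apply, hf, hg]
  rw [show n + m = m + n by ring, show m + (n + p) = m + n + p by ring,
    show m + (n + p + ν) = m + n + p + ν by ring, show n + (m + p) = m + n + p by ring,
    show n + (m + p + ν) = m + n + p + ν by ring, show m + n + ν + p = m + n + p + ν by ring]
  push_cast
  module

lemma forall_associatorDefect_L_eq_zero_iff (hν : ν ≠ 0)
    (hbr : ∀ m n : ℤ, br (L m) (L n) = (m - n : ℂ) • L (m + n))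
    (hmul : ∀ m n : ℤ, mul (L m) (L n) = φ m n • L (m + n) + ϱ m n • L (m + n + ν))
    (hf : ∀ m n : ℤ, φ m n = (m - n : ℂ) * f m) (hg : ∀ m n : ℤ, ϱ m n = (m - n + ν : ℂ) * g m) :
    (∀ m n p, associatorDefect br mul (L m) (L n) (L p) = 0) ↔
      EqE f ∧ EqE2 ν g ∧ EqE3 ν f g := by
  constructor
  · intro h
    have hcoeff m n p := (smul_L_add_smul_L_add_smul_L_eq_zero_iff (by omega) (by omega)
      (by omega)).1 ((associatorDefect_L hbr hmul hf hg m n p).symm.trans (h m n p))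
    refine ⟨fun m n => ?_, fun m n => ?_, fun m n => ?_⟩
    · simpa using (hcoeff m n (m + n - 1)).1
    · simpa [sub_eq_zero, eq_comm] using (hcoeff m n (m + n + ν + ν - 1)).2.2
    · simpa [sub_eq_zero] using (hcoeff m n (m + n + ν - 1)).2.1
  · rintro ⟨hE, hE2, hE3⟩ m n p
    rw [associatorDefect_L hbr hmul hf hg, hE m n, sub_eq_zero.2 (hE3 m n),
      sub_eq_zero.2 (hE2 m n).symm]
    simp

end WittProduct

theorem stmt7_general (ν : ℤ) (hν : ν ≠ 0) (br mul : W →ₗ[ℂ] W →ₗ[ℂ] W)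
    (hbr : ∀ m n : ℤ, br (L m) (L n) = (m - n : ℂ) • L (m + n))
    (φ ϱ : ℤ → ℤ → ℂ)
    (hmul : ∀ m n : ℤ,
      mul (L m) (L n) = φ m n • L (m + n) + ϱ m n • L (m + n + ν)) :
    IsPostLie br mul ↔
      ∃ f g : ℤ → ℂ,
        (∀ m n : ℤ, φ m n = (m - n : ℂ) * f m) ∧
        (∀ m n : ℤ, ϱ m n = (m - n + ν : ℂ) * g m) ∧
        EqE f ∧ EqE2 ν g ∧ EqE3 ν f g := by
  rw [isPostLie_iff, forall_L_eq_zero_iff, forall_L_eq_zero_iff,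
    forall_leibnizDefect_L_eq_zero_iff hν hbr hmul]
  constructor
  · rintro ⟨hassoc, ⟨f, hf⟩, g, hg⟩
    exact ⟨f, g, hf, hg, (forall_associatorDefect_L_eq_zero_iff hν hbr hmul hf hg).1 hassoc⟩
  · rintro ⟨f, g, hf, hg, hE⟩
    exact ⟨(forall_associatorDefect_L_eq_zero_iff hν hbr hmul hf hg).2 hE, ⟨f, hf⟩, g, hg⟩

theorem stmt7 (ν : ℤ) (hν : ν ≠ 0) (br mul : W →ₗ[ℂ] W →ₗ[ℂ] W)
    (hbr : ∀ m n : ℤ, br (L m) (L n) = (m - n : ℂ) • L (m + n))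
    (φ ϱ : ℤ → ℤ → ℂ) (hϱ : ∃ m n : ℤ, ϱ m n ≠ 0)
    (hmul : ∀ m n : ℤ,
      mul (L m) (L n) = φ m n • L (m + n) + ϱ m n • L (m + n + ν)) :
    IsPostLie br mul ↔
      ∃ f g : ℤ → ℂ,
        (∀ m n : ℤ, φ m n = (m - n : ℂ) * f m) ∧
        (∀ m n : ℤ, ϱ m n = (m - n + ν : ℂ) * g m) ∧
        EqE f ∧ EqE2 ν g ∧ EqE3 ν f g :=
  stmt7_general ν hν br mul hbr φ ϱ hmul
end
end

section
/- Let ν be a nonzero integer, let f, g : ℤ → ℂ, and let R : W → W be the ℂ-linear map on the Witt algebra W determined by R(L_m) = f(m)·L_m + g(m)·L_{m+ν} for all m ∈ ℤ. Then R is a Rota–Baxter operator of weight 1 on W if and only if f satisfies equation (E) and (f, g, ν) satisfy equations (E2) and (E3). -/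
noncomputable section

/-- `R` is a Rota–Baxter operator of weight 1 with respect to the bracket `br`. -/
def IsRotaBaxterWeightOne (br : W →ₗ[ℂ] W →ₗ[ℂ] W) (R : W →ₗ[ℂ] W) : Prop :=
  ∀ x y : W, br (R x) (R y) = R (br (R x) y + br x (R y)) + R (br x y)

/-!
Both sides of the Rota–Baxter identity are bilinear, so it suffices to check it on pairs of
basis vectors `L m, L n`. There both sides are combinations of `L (m+n)`, `L (m+n+ν)` and
`L (m+n+2ν)`, which are distinct basis vectors because `ν ≠ 0`; comparing their coefficients
gives exactly (E), (E3) and (E2) at `(m, n)`.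
-/

lemma isRotaBaxterWeightOne_iff_forall_L (br : W →ₗ[ℂ] W →ₗ[ℂ] W) (R : W →ₗ[ℂ] W) :
    IsRotaBaxterWeightOne br R ↔ ∀ m n : ℤ,
      br (R (L m)) (R (L n)) = R (br (R (L m)) (L n) + br (L m) (R (L n))) + R (br (L m) (L n)) := by
  refine ⟨fun h m n => h (L m) (L n), fun h x y => ?_⟩
  have key : (br ∘ₗ R).compl₂ R =
      (br ∘ₗ R).compr₂ R + (br.compl₂ R).compr₂ R + br.compr₂ R := by
    ext m n : 4
    simpa [L, map_add] using h m n
  simpa [map_add] using LinearMap.congr_fun (LinearMap.congr_fun key x) y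

lemma smul_L_add_smul_L_add_smul_L_eq_iff {ν : ℤ} (hν : ν ≠ 0) (k : ℤ) (a b c a' b' c' : ℂ) :
    a • L k + b • L (k + ν) + c • L (k + 2 * ν) = a' • L k + b' • L (k + ν) + c' • L (k + 2 * ν) ↔
      a = a' ∧ b = b' ∧ c = c' := by
  refine ⟨fun h => ?_, by rintro ⟨rfl, rfl, rfl⟩; rfl⟩
  simpa [L, hν, show 2 * ν ≠ ν by omega, show ν ≠ 2 * ν by omega] using
    And.intro (DFunLike.congr_fun h k) <|
      And.intro (DFunLike.congr_fun h (k + ν)) (DFunLike.congr_fun h (k + 2 * ν))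

section BasisComputation

variable {ν : ℤ} {br : W →ₗ[ℂ] W →ₗ[ℂ] W} {f g : ℤ → ℂ} {R : W →ₗ[ℂ] W}
  (hbr : ∀ m n : ℤ, br (L m) (L n) = (m - n : ℂ) • L (m + n))
  (hR : ∀ m : ℤ, R (L m) = f m • L m + g m • L (m + ν))
include hbr hR

lemma bracket_R_L_R_L (m n : ℤ) :
    br (R (L m)) (R (L n)) =
      (f m * f n * (m - n)) • L (m + n)
        + (f m * g n * (m - n - ν) + g m * f n * (m - n + ν)) • L (m + n + ν)
        + (g m * g n * (m - n)) • L (m + n + 2 * ν) := by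
  simp only [hR, map_add, map_smul, LinearMap.add_apply, LinearMap.smul_apply, hbr, smul_smul]
  push_cast
  rw [show m + (n + ν) = m + n + ν by ring, show m + ν + n = m + n + ν by ring,
    show m + ν + (n + ν) = m + n + 2 * ν by ring]
  module

lemma R_rotaBaxter_rhs_L_L (m n : ℤ) :
    R (br (R (L m)) (L n) + br (L m) (R (L n))) + R (br (L m) (L n)) =
      ((f m + f n + 1) * (m - n) * f (m + n)) • L (m + n)
        + ((f m + f n + 1) * (m - n) * g (m + n)
            + ((m - n + ν) * g m + (m - n - ν) * g n) * f (m + n + ν)) • L (m + n + ν)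
        + (((m - n + ν) * g m + (m - n - ν) * g n) * g (m + n + ν)) • L (m + n + 2 * ν) := by
  simp only [hR, map_add, map_smul, LinearMap.add_apply, LinearMap.smul_apply, hbr, smul_smul]
  push_cast
  rw [show m + (n + ν) = m + n + ν by ring, show m + ν + n = m + n + ν by ring,
    show m + n + ν + ν = m + n + 2 * ν by ring]
  module

lemma rotaBaxter_L_L_iff (hν : ν ≠ 0) (m n : ℤ) :
    br (R (L m)) (R (L n)) = R (br (R (L m)) (L n) + br (L m) (R (L n))) + R (br (L m) (L n)) ↔
      (m - n : ℂ) * (f (m + n) + f m * f (m + n) + f n * f (m + n) - f m * f n) = 0 ∧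
      (m - n : ℂ) * g m * g n =
        ((m - n + ν : ℂ) * g m + (m - n - ν : ℂ) * g n) * g (m + n + ν) ∧
      (m - n : ℂ) * (f m + f n + 1) * g (m + n) =
        (n - m + ν : ℂ) * (f (m + n + ν) - f m) * g n +
          (n - m - ν : ℂ) * (f (m + n + ν) - f n) * g m := by
  rw [bracket_R_L_R_L hbr hR, R_rotaBaxter_rhs_L_L hbr hR, smul_L_add_smul_L_add_smul_L_eq_iff hν]
  refine ⟨fun ⟨h₀, h₁, h₂⟩ => ⟨?_, ?_, ?_⟩, fun ⟨hE, hE2, hE3⟩ => ⟨?_, ?_, ?_⟩⟩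
  · linear_combination -h₀
  · linear_combination h₂
  · linear_combination -h₁
  · linear_combination -hE
  · linear_combination -hE3
  · linear_combination hE2

end BasisComputation

theorem stmt18 (ν : ℤ) (hν : ν ≠ 0) (br : W →ₗ[ℂ] W →ₗ[ℂ] W)
    (hbr : ∀ m n : ℤ, br (L m) (L n) = (m - n : ℂ) • L (m + n))
    (f g : ℤ → ℂ) (R : W →ₗ[ℂ] W)
    (hR : ∀ m : ℤ, R (L m) = f m • L m + g m • L (m + ν)) :
    IsRotaBaxterWeightOne br R ↔ (EqE f ∧ EqE2 ν g ∧ EqE3 ν f g) := by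
  simp only [isRotaBaxterWeightOne_iff_forall_L, rotaBaxter_L_L_iff hbr hR hν, forall_and]
  rfl
end
end
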